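/- arXiv:1312.1574 — 13 statements merged into one kernel-verified Lean document; each statement's English description precedes it below -/
import Mathlib

section
/- Let ε > 0 and let u : ℤ³ → ℝ be any function. Then at every lattice point the pointwise identity ε³·[Δ₁((Δ₃u)² − (Δ₂u)²) + Δ₂((Δ₁u)² − (Δ₃u)²) + Δ₃((Δ₂u)² − (Δ₁u)²)] = 2·[(T₁u − T₂u)·T₁₂u + (T₃u − T₁u)·T₁₃u + (T₂u − T₃u)·T₂₃u] holds. In particular, the discrete conservation law Δ₁((Δ₃u)² − (Δ₂u)²) + Δ₂((Δ₁u)² − (Δ₃u)²) + Δ₃((Δ₂u)² − (Δ₁u)²) = 0 holds at a point if and only if the lattice KP equation (T₁u − T₂u)T₁₂u + (T₃u − T₁u)T₁₃u + (T₂u − T₃u)T₂₃u = 0 holds at that point. -/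
/-!
Multiplying by `ε³` clears the denominators of the discrete derivatives. The squares of the
unshifted differences `Tᵢu − u` then telescope away, and in the shifted ones
`(Tᵢⱼu − Tᵢu)² − (Tᵢₖu − Tᵢu)²` the squares cancel around the cycle `1 → 2 → 3 → 1`, leaving
twice the cross terms, which is the lattice KP expression.
-/

noncomputable section

/-- Forward shift in the first lattice direction. -/
def T1 (v : ℤ × ℤ × ℤ → ℝ) : ℤ × ℤ × ℤ → ℝ := fun p => v (p.1 + 1, p.2.1, p.2.2)

/-- Forward shift in the second lattice direction. -/
def T2 (v : ℤ × ℤ × ℤ → ℝ) : ℤ × ℤ × ℤ → ℝ := fun p => v (p.1, p.2.1 + 1, p.2.2)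

/-- Forward shift in the third lattice direction. -/
def T3 (v : ℤ × ℤ × ℤ → ℝ) : ℤ × ℤ × ℤ → ℝ := fun p => v (p.1, p.2.1, p.2.2 + 1)

/-- Discrete derivative `Δ₁ = (T₁ - 1)/ε`. -/
def D1 (ε : ℝ) (v : ℤ × ℤ × ℤ → ℝ) : ℤ × ℤ × ℤ → ℝ := fun p => (T1 v p - v p) / ε

/-- Discrete derivative `Δ₂ = (T₂ - 1)/ε`. -/
def D2 (ε : ℝ) (v : ℤ × ℤ × ℤ → ℝ) : ℤ × ℤ × ℤ → ℝ := fun p => (T2 v p - v p) / ε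

/-- Discrete derivative `Δ₃ = (T₃ - 1)/ε`. -/
def D3 (ε : ℝ) (v : ℤ × ℤ × ℤ → ℝ) : ℤ × ℤ × ℤ → ℝ := fun p => (T3 v p - v p) / ε

def kpConservationLaw (ε : ℝ) (u : ℤ × ℤ × ℤ → ℝ) : ℤ × ℤ × ℤ → ℝ :=
  D1 ε (fun q => (D3 ε u q) ^ 2 - (D2 ε u q) ^ 2)
    + D2 ε (fun q => (D1 ε u q) ^ 2 - (D3 ε u q) ^ 2)
    + D3 ε (fun q => (D2 ε u q) ^ 2 - (D1 ε u q) ^ 2)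

def latticeKP (u : ℤ × ℤ × ℤ → ℝ) : ℤ × ℤ × ℤ → ℝ :=
  (T1 u - T2 u) * T1 (T2 u) + (T3 u - T1 u) * T1 (T3 u) + (T2 u - T3 u) * T2 (T3 u)

theorem pow_three_mul_kpConservationLaw {ε : ℝ} (hε : ε ≠ 0) (u : ℤ × ℤ × ℤ → ℝ)
    (p : ℤ × ℤ × ℤ) : ε ^ 3 * kpConservationLaw ε u p = 2 * latticeKP u p := by
  simp only [kpConservationLaw, latticeKP, Pi.add_apply, Pi.sub_apply, Pi.mul_apply,
    D1, D2, D3, T1, T2, T3]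
  field_simp
  ring

theorem kpConservationLaw_eq_zero_iff {ε : ℝ} (hε : ε ≠ 0) (u : ℤ × ℤ × ℤ → ℝ)
    (p : ℤ × ℤ × ℤ) : kpConservationLaw ε u p = 0 ↔ latticeKP u p = 0 := by
  rw [← mul_right_inj' (pow_ne_zero 3 hε), pow_three_mul_kpConservationLaw hε, mul_zero,
    mul_eq_zero, or_iff_right two_ne_zero]

/-- The discrete conservation law
`Δ₁((Δ₃u)² − (Δ₂u)²) + Δ₂((Δ₁u)² − (Δ₃u)²) + Δ₃((Δ₂u)² − (Δ₁u)²)` is, up to the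
factor `2/ε³`, the lattice KP equation
`(T₁u − T₂u)T₁₂u + (T₃u − T₁u)T₁₃u + (T₂u − T₃u)T₂₃u = 0`. -/
theorem lattice_KP_conservation (ε : ℝ) (hε : 0 < ε) (u : ℤ × ℤ × ℤ → ℝ)
    (p : ℤ × ℤ × ℤ) :
    (ε ^ 3 * (D1 ε (fun q => (D3 ε u q) ^ 2 - (D2 ε u q) ^ 2) p
        + D2 ε (fun q => (D1 ε u q) ^ 2 - (D3 ε u q) ^ 2) p
        + D3 ε (fun q => (D2 ε u q) ^ 2 - (D1 ε u q) ^ 2) p)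
      = 2 * ((T1 u p - T2 u p) * T1 (T2 u) p + (T3 u p - T1 u p) * T1 (T3 u) p
        + (T2 u p - T3 u p) * T2 (T3 u) p))
    ∧ (D1 ε (fun q => (D3 ε u q) ^ 2 - (D2 ε u q) ^ 2) p
        + D2 ε (fun q => (D1 ε u q) ^ 2 - (D3 ε u q) ^ 2) p
        + D3 ε (fun q => (D2 ε u q) ^ 2 - (D1 ε u q) ^ 2) p = 0
      ↔ (T1 u p - T2 u p) * T1 (T2 u) p + (T3 u p - T1 u p) * T1 (T3 u) p
        + (T2 u p - T3 u p) * T2 (T3 u) p = 0) :=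
  ⟨pow_three_mul_kpConservationLaw hε.ne' u p, kpConservationLaw_eq_zero_iff hε.ne' u p⟩
end
end

section
/- Let ε > 0 and let u : ℤ³ → ℝ satisfy the lattice KP equation (T₁u − T₂u)T₁₂u + (T₃u − T₁u)T₁₃u + (T₂u − T₃u)T₂₃u = 0 at every lattice point, and assume the differences Δ₃u − Δ₂u, Δ₁u − Δ₃u, Δ₂u − Δ₁u are nonzero at every lattice point. Then for all real constants α₁, α₂, α₃ with α₁ + α₂ + α₃ = 0, the discrete conservation law α₁·Δ₁ log|Δ₃u − Δ₂u| + α₂·Δ₂ log|Δ₁u − Δ₃u| + α₃·Δ₃ log|Δ₂u − Δ₁u| = 0 holds at every lattice point. -/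
/-!
Write `e = Δ₃u − Δ₂u`, `f = Δ₁u − Δ₃u`, `g = Δ₂u − Δ₁u`. Up to the factor `−ε²`, the lattice KP
equation is each of the cross-multiplied identities `f · T₁e = e · T₂f` and `g · T₂f = f · T₃g`,
so the ratios `T₁e / e`, `T₂f / f`, `T₃g / g` agree. Taking logarithms, the three discrete
derivatives `Δ₁ log|e|`, `Δ₂ log|f|`, `Δ₃ log|g|` coincide, and any combination of them with
coefficients summing to zero vanishes.
-/

noncomputable section

theorem Real.log_sub_log_eq_of_mul_eq {a b c d : ℝ} (ha : a ≠ 0) (hb : b ≠ 0) (hc : c ≠ 0)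
    (hd : d ≠ 0) (h : a * d = b * c) : Real.log d - Real.log b = Real.log c - Real.log a := by
  have := congrArg Real.log h
  rw [Real.log_mul ha hd, Real.log_mul hb hc] at this
  linarith

section LatticeKP

variable {ε : ℝ} {u : ℤ × ℤ × ℤ → ℝ} {p : ℤ × ℤ × ℤ}

theorem lattice_KP_cross_mul_12 (hε : ε ≠ 0)
    (hKP : (T1 u p - T2 u p) * T1 (T2 u) p + (T3 u p - T1 u p) * T1 (T3 u) p
        + (T2 u p - T3 u p) * T2 (T3 u) p = 0) :
    (D1 ε u p - D3 ε u p) * T1 (fun q => D3 ε u q - D2 ε u q) p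
      = (D3 ε u p - D2 ε u p) * T2 (fun q => D1 ε u q - D3 ε u q) p := by
  simp only [D1, D2, D3, T1, T2, T3] at hKP ⊢
  field_simp
  linear_combination -hKP

theorem lattice_KP_cross_mul_23 (hε : ε ≠ 0)
    (hKP : (T1 u p - T2 u p) * T1 (T2 u) p + (T3 u p - T1 u p) * T1 (T3 u) p
        + (T2 u p - T3 u p) * T2 (T3 u) p = 0) :
    (D2 ε u p - D1 ε u p) * T2 (fun q => D1 ε u q - D3 ε u q) p
      = (D1 ε u p - D3 ε u p) * T3 (fun q => D2 ε u q - D1 ε u q) p := by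
  simp only [D1, D2, D3, T1, T2, T3] at hKP ⊢
  field_simp
  linear_combination -hKP

theorem D1_log_abs_eq_D2_log_abs {v w : ℤ × ℤ × ℤ → ℝ} (hv : ∀ q, v q ≠ 0) (hw : ∀ q, w q ≠ 0)
    (h : v p * T1 w p = w p * T2 v p) :
    D1 ε (fun q => Real.log |w q|) p = D2 ε (fun q => Real.log |v q|) p := by
  change (Real.log |T1 w p| - Real.log |w p|) / ε = (Real.log |T2 v p| - Real.log |v p|) / ε
  simp only [Real.log_abs]
  exact congrArg (· / ε) (Real.log_sub_log_eq_of_mul_eq (hv p) (hw p) (hv _) (hw _) h)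

theorem D2_log_abs_eq_D3_log_abs {v w : ℤ × ℤ × ℤ → ℝ} (hv : ∀ q, v q ≠ 0) (hw : ∀ q, w q ≠ 0)
    (h : v p * T2 w p = w p * T3 v p) :
    D2 ε (fun q => Real.log |w q|) p = D3 ε (fun q => Real.log |v q|) p := by
  change (Real.log |T2 w p| - Real.log |w p|) / ε = (Real.log |T3 v p| - Real.log |v p|) / ε
  simp only [Real.log_abs]
  exact congrArg (· / ε) (Real.log_sub_log_eq_of_mul_eq (hv p) (hw p) (hv _) (hw _) h)

end LatticeKP

/-- If `u` satisfies the lattice KP equation everywhere and the differences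
`Δ₃u − Δ₂u`, `Δ₁u − Δ₃u`, `Δ₂u − Δ₁u` are nowhere zero, then for all constants
`α₁ + α₂ + α₃ = 0` the discrete conservation law
`α₁Δ₁ log|Δ₃u − Δ₂u| + α₂Δ₂ log|Δ₁u − Δ₃u| + α₃Δ₃ log|Δ₂u − Δ₁u| = 0` holds. -/
theorem lattice_KP_log_conservation (ε : ℝ) (hε : 0 < ε) (u : ℤ × ℤ × ℤ → ℝ)
    (hKP : ∀ p : ℤ × ℤ × ℤ,
      (T1 u p - T2 u p) * T1 (T2 u) p + (T3 u p - T1 u p) * T1 (T3 u) p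
        + (T2 u p - T3 u p) * T2 (T3 u) p = 0)
    (h32 : ∀ p : ℤ × ℤ × ℤ, D3 ε u p - D2 ε u p ≠ 0)
    (h13 : ∀ p : ℤ × ℤ × ℤ, D1 ε u p - D3 ε u p ≠ 0)
    (h21 : ∀ p : ℤ × ℤ × ℤ, D2 ε u p - D1 ε u p ≠ 0)
    (α₁ α₂ α₃ : ℝ) (hα : α₁ + α₂ + α₃ = 0) :
    ∀ p : ℤ × ℤ × ℤ,
      α₁ * D1 ε (fun q => Real.log |D3 ε u q - D2 ε u q|) p
      + α₂ * D2 ε (fun q => Real.log |D1 ε u q - D3 ε u q|) p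
      + α₃ * D3 ε (fun q => Real.log |D2 ε u q - D1 ε u q|) p = 0 := by
  intro p
  rw [← D2_log_abs_eq_D3_log_abs h21 h13 (lattice_KP_cross_mul_23 hε.ne' (hKP p)),
    ← D1_log_abs_eq_D2_log_abs h13 h32 (lattice_KP_cross_mul_12 hε.ne' (hKP p))]
  linear_combination D1 ε (fun q => Real.log |D3 ε u q - D2 ε u q|) p * hα
end
end

section
/- Let ε > 0 and let u : ℤ³ → ℝ be any function. Then at every lattice point the pointwise identity ε³·[Δ₁((Δ₂u)²/2 − Δ₂u·Δ₃u) + Δ₂(Δ₁u·Δ₃u − (Δ₁u)²/2)] = −[T₁₂u·T₁₃u + T₂u·T₂₃u + T₁u·T₃u − T₁₂u·T₂₃u − T₁u·T₁₃u − T₂u·T₃u] holds. In particular, the discrete conservation law Δ₁((Δ₂u)²/2 − Δ₂uΔ₃u) + Δ₂(Δ₁uΔ₃u − (Δ₁u)²/2) = 0 holds at a point if and only if the octahedron equation T₁₂u·T₁₃u + T₂u·T₂₃u + T₁u·T₃u = T₁₂u·T₂₃u + T₁u·T₁₃u + T₂u·T₃u holds at that point. -/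
noncomputable section

def fluxDivergence (ε : ℝ) (u : ℤ × ℤ × ℤ → ℝ) (p : ℤ × ℤ × ℤ) : ℝ :=
  D1 ε (fun q => (D2 ε u q) ^ 2 / 2 - D2 ε u q * D3 ε u q) p
    + D2 ε (fun q => D1 ε u q * D3 ε u q - (D1 ε u q) ^ 2 / 2) p

def octahedronDefect (u : ℤ × ℤ × ℤ → ℝ) (p : ℤ × ℤ × ℤ) : ℝ :=
  T1 (T2 u) p * T1 (T3 u) p + T2 u p * T2 (T3 u) p + T1 u p * T3 u p
    - T1 (T2 u) p * T2 (T3 u) p - T1 u p * T1 (T3 u) p - T2 u p * T3 u p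

section

variable (u : ℤ × ℤ × ℤ → ℝ) (p : ℤ × ℤ × ℤ)

theorem pow_three_mul_fluxDivergence {ε : ℝ} (hε : ε ≠ 0) :
    ε ^ 3 * fluxDivergence ε u p = -octahedronDefect u p := by
  simp only [fluxDivergence, octahedronDefect, D1, D2, D3, T1, T2, T3]
  field_simp
  ring

theorem fluxDivergence_eq_zero_iff {ε : ℝ} (hε : ε ≠ 0) :
    fluxDivergence ε u p = 0 ↔ octahedronDefect u p = 0 := by
  rw [← mul_eq_zero_iff_left (pow_ne_zero 3 hε), pow_three_mul_fluxDivergence u p hε,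
    neg_eq_zero]

theorem octahedronDefect_eq_zero_iff :
    octahedronDefect u p = 0 ↔
      T1 (T2 u) p * T1 (T3 u) p + T2 u p * T2 (T3 u) p + T1 u p * T3 u p
        = T1 (T2 u) p * T2 (T3 u) p + T1 u p * T1 (T3 u) p + T2 u p * T3 u p := by
  rw [octahedronDefect]
  constructor <;> intro h <;> linarith

end

/-- The discrete conservation law
`Δ₁((Δ₂u)²/2 − Δ₂uΔ₃u) + Δ₂(Δ₁uΔ₃u − (Δ₁u)²/2) = 0` is, up to the factor
`−1/ε³`, the octahedron equation
`T₁₂u·T₁₃u + T₂u·T₂₃u + T₁u·T₃u = T₁₂u·T₂₃u + T₁u·T₁₃u + T₂u·T₃u`. -/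
theorem octahedron_case2_conservation (ε : ℝ) (hε : 0 < ε) (u : ℤ × ℤ × ℤ → ℝ)
    (p : ℤ × ℤ × ℤ) :
    (ε ^ 3 * (D1 ε (fun q => (D2 ε u q) ^ 2 / 2 - D2 ε u q * D3 ε u q) p
        + D2 ε (fun q => D1 ε u q * D3 ε u q - (D1 ε u q) ^ 2 / 2) p)
      = -(T1 (T2 u) p * T1 (T3 u) p + T2 u p * T2 (T3 u) p + T1 u p * T3 u p
          - T1 (T2 u) p * T2 (T3 u) p - T1 u p * T1 (T3 u) p - T2 u p * T3 u p))
    ∧ (D1 ε (fun q => (D2 ε u q) ^ 2 / 2 - D2 ε u q * D3 ε u q) p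
        + D2 ε (fun q => D1 ε u q * D3 ε u q - (D1 ε u q) ^ 2 / 2) p = 0
      ↔ T1 (T2 u) p * T1 (T3 u) p + T2 u p * T2 (T3 u) p + T1 u p * T3 u p
        = T1 (T2 u) p * T2 (T3 u) p + T1 u p * T1 (T3 u) p + T2 u p * T3 u p) :=
  ⟨pow_three_mul_fluxDivergence u p hε.ne',
    (fluxDivergence_eq_zero_iff u p hε.ne').trans (octahedronDefect_eq_zero_iff u p)⟩
end
end

section
/- Let ε > 0 and let u : ℤ³ → ℝ be any function. Then at every lattice point the pointwise identity ε·[Δ₁ e^{Δ₂u} + Δ₃(e^{Δ₂u − Δ₁u} − e^{Δ₂u})] = e^{(T₂₃u − T₁u)/ε}·[e^{(T₁u − T₁₃u)/ε} + e^{(T₁₂u − T₂₃u)/ε} − e^{(T₁u − T₃u)/ε} − e^{(T₂u − T₂₃u)/ε}] holds. In particular, the discrete conservation law Δ₁ e^{Δ₂u} + Δ₃(e^{Δ₂u − Δ₁u} − e^{Δ₂u}) = 0 holds at a point if and only if the octahedron equation e^{(T₁u − T₁₃u)/ε} + e^{(T₁₂u − T₂₃u)/ε} = e^{(T₁u − T₃u)/ε}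 + e^{(T₂u − T₂₃u)/ε} holds at that point. -/
noncomputable section

/-!
In the variables `x = e^{u/ε}` one has `e^{Δ₂u} = T₂x / x` and `e^{Δ₂u − Δ₁u} = T₂x / T₁x`, so `ε`
times the conservation law is a rational expression in the values of `x` on the unit cube at `p`.
Its two `T₂x / x` terms cancel, and what is left is `T₂₃x / T₁x` times the octahedron combination.
As `T₂₃x / T₁x = e^{(T₂₃u − T₁u)/ε}` is positive and `ε ≠ 0`, the conservation law and the
octahedron equation vanish together.
-/

theorem telescoping_identity {K : Type*} [Field K] {a a₁ a₂ a₃ a₁₂ a₁₃ a₂₃ : K}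
    (h₁ : a₁ ≠ 0) (h₂₃ : a₂₃ ≠ 0) :
    (a₁₂ / a₁ - a₂ / a) + (a₂₃ / a₁₃ - a₂₃ / a₃ - (a₂ / a₁ - a₂ / a))
      = a₂₃ / a₁ * (a₁ / a₁₃ + a₁₂ / a₂₃ - a₁ / a₃ - a₂ / a₂₃) := by
  field_simp
  ring

theorem exp_sub_div (a b ε : ℝ) : Real.exp ((a - b) / ε) = Real.exp (a / ε) / Real.exp (b / ε) := by
  rw [sub_div, Real.exp_sub]

def expDiv (ε : ℝ) (u : ℤ × ℤ × ℤ → ℝ) : ℤ × ℤ × ℤ → ℝ := fun q => Real.exp (u q / ε)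

section

variable (ε : ℝ) (u : ℤ × ℤ × ℤ → ℝ) (q : ℤ × ℤ × ℤ)

theorem exp_D2 : Real.exp (D2 ε u q) = T2 (expDiv ε u) q / expDiv ε u q :=
  exp_sub_div _ _ _

theorem exp_D2_sub_D1 : Real.exp (D2 ε u q - D1 ε u q) = T2 (expDiv ε u) q / T1 (expDiv ε u) q := by
  rw [D2, D1, div_sub_div_same, sub_sub_sub_cancel_right]
  exact exp_sub_div _ _ _

end

theorem mul_conservation_eq {ε : ℝ} (hε : ε ≠ 0) (u : ℤ × ℤ × ℤ → ℝ) (p : ℤ × ℤ × ℤ) :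
    ε * (D1 ε (fun q => Real.exp (D2 ε u q)) p
        + D3 ε (fun q => Real.exp (D2 ε u q - D1 ε u q) - Real.exp (D2 ε u q)) p)
      = Real.exp ((T2 (T3 u) p - T1 u p) / ε)
        * (Real.exp ((T1 u p - T1 (T3 u) p) / ε)
          + Real.exp ((T1 (T2 u) p - T2 (T3 u) p) / ε)
          - Real.exp ((T1 u p - T3 u p) / ε)
          - Real.exp ((T2 u p - T2 (T3 u) p) / ε)) := by
  simp only [exp_D2, exp_D2_sub_D1, exp_sub_div]
  rw [mul_add, D1, D3, mul_div_cancel₀ _ hε, mul_div_cancel₀ _ hε]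
  exact telescoping_identity (Real.exp_pos _).ne' (Real.exp_pos _).ne'

/-- The discrete conservation law `Δ₁ e^{Δ₂u} + Δ₃(e^{Δ₂u − Δ₁u} − e^{Δ₂u}) = 0`
is, up to the positive factor `e^{(T₂₃u − T₁u)/ε}/ε`, the octahedron equation
`e^{(T₁u − T₁₃u)/ε} + e^{(T₁₂u − T₂₃u)/ε} = e^{(T₁u − T₃u)/ε} + e^{(T₂u − T₂₃u)/ε}`. -/
theorem octahedron_case1_conservation (ε : ℝ) (hε : 0 < ε) (u : ℤ × ℤ × ℤ → ℝ)
    (p : ℤ × ℤ × ℤ) :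
    (ε * (D1 ε (fun q => Real.exp (D2 ε u q)) p
        + D3 ε (fun q => Real.exp (D2 ε u q - D1 ε u q) - Real.exp (D2 ε u q)) p)
      = Real.exp ((T2 (T3 u) p - T1 u p) / ε)
        * (Real.exp ((T1 u p - T1 (T3 u) p) / ε)
          + Real.exp ((T1 (T2 u) p - T2 (T3 u) p) / ε)
          - Real.exp ((T1 u p - T3 u p) / ε)
          - Real.exp ((T2 u p - T2 (T3 u) p) / ε)))
    ∧ (D1 ε (fun q => Real.exp (D2 ε u q)) p
        + D3 ε (fun q => Real.exp (D2 ε u q - D1 ε u q) - Real.exp (D2 ε u q)) p = 0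
      ↔ Real.exp ((T1 u p - T1 (T3 u) p) / ε) + Real.exp ((T1 (T2 u) p - T2 (T3 u) p) / ε)
        = Real.exp ((T1 u p - T3 u p) / ε) + Real.exp ((T2 u p - T2 (T3 u) p) / ε)) := by
  have key := mul_conservation_eq hε.ne' u p
  refine ⟨key, ?_⟩
  rw [← mul_eq_zero_iff_left hε.ne', key, mul_eq_zero_iff_left (Real.exp_pos _).ne', sub_sub,
    sub_eq_zero]
end
end

section
/- Let ε > 0, let u : ℤ³ → ℝ be any function, and define τ : ℤ³ → ℝ pointwise by τ = e^{u/ε}. Then at every lattice point the pointwise identity ε·[Δ₁ e^{Δ₂u} − Δ₂ e^{Δ₁u} + Δ₃(e^{Δ₁u} − e^{Δ₂u})] = [T₁₂τ/T₁τ − T₂₃τ/T₃τ] − [T₁₂τ/T₂τ − T₁₃τ/T₃τ] holds. In particular, the discrete conservation law Δ₁ e^{Δ₂u} − Δ₂ e^{Δ₁u} + Δ₃(e^{Δ₁u} − e^{Δ₂u}) = 0 holds at a point if and only if τ satisfies the lattice Toda equation (T₁ − T₃)(T₂τ/τ) = (T₂ − T₃)(T₁τ/τ) at that point. -/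
/-!
Since `τ = e^{u/ε}`, exponentiating a discrete derivative gives a ratio of shifts,
`e^{Δᵢu} = Tᵢτ/τ`. Writing `f = T₁τ/τ`, `g = T₂τ/τ` and `εΔᵢ = Tᵢ − 1`, the identity parts of the
three difference operators cancel in `Δ₁g − Δ₂f + Δ₃(f − g)`, so `ε` times the conservation law is
`(T₁ − T₃)g − (T₂ − T₃)f`, the defect of the lattice Toda equation; its four terms are the
quotients `T₁₂τ/T₁τ`, `T₂₃τ/T₃τ`, `T₁₂τ/T₂τ`, `T₁₃τ/T₃τ`.
-/

noncomputable section

section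

variable {ε : ℝ} {u τ : ℤ × ℤ × ℤ → ℝ}

theorem exp_D1_eq_T1_div (hτ : ∀ p, τ p = Real.exp (u p / ε)) (p : ℤ × ℤ × ℤ) :
    Real.exp (D1 ε u p) = T1 τ p / τ p := by
  simp only [D1, T1, hτ, sub_div, Real.exp_sub]

theorem exp_D2_eq_T2_div (hτ : ∀ p, τ p = Real.exp (u p / ε)) (p : ℤ × ℤ × ℤ) :
    Real.exp (D2 ε u p) = T2 τ p / τ p := by
  simp only [D2, T2, hτ, sub_div, Real.exp_sub]

end

section

variable {ε : ℝ} (hε : ε ≠ 0) (f g : ℤ × ℤ × ℤ → ℝ) (p : ℤ × ℤ × ℤ)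
include hε

theorem mul_conservation_eq_toda_defect :
    ε * (D1 ε g p - D2 ε f p + D3 ε (fun q => f q - g q) p)
      = (T1 g p - T3 g p) - (T2 f p - T3 f p) := by
  simp only [D1, D2, D3, T3]
  field_simp
  ring

theorem conservation_eq_zero_iff_toda :
    D1 ε g p - D2 ε f p + D3 ε (fun q => f q - g q) p = 0
      ↔ T1 g p - T3 g p = T2 f p - T3 f p := by
  rw [← mul_right_inj' hε, mul_zero, mul_conservation_eq_toda_defect hε, sub_eq_zero]

end

/-- With `τ = e^{u/ε}`, the discrete conservation law
`Δ₁ e^{Δ₂u} − Δ₂ e^{Δ₁u} + Δ₃(e^{Δ₁u} − e^{Δ₂u}) = 0` is, up to the factor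
`1/ε`, the lattice Toda equation `(T₁ − T₃)(T₂τ/τ) = (T₂ − T₃)(T₁τ/τ)`. -/
theorem lattice_Toda_conservation (ε : ℝ) (hε : 0 < ε) (u : ℤ × ℤ × ℤ → ℝ)
    (τ : ℤ × ℤ × ℤ → ℝ) (hτ : ∀ p, τ p = Real.exp (u p / ε)) (p : ℤ × ℤ × ℤ) :
    (ε * (D1 ε (fun q => Real.exp (D2 ε u q)) p
        - D2 ε (fun q => Real.exp (D1 ε u q)) p
        + D3 ε (fun q => Real.exp (D1 ε u q) - Real.exp (D2 ε u q)) p)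
      = (T1 (T2 τ) p / T1 τ p - T2 (T3 τ) p / T3 τ p)
        - (T1 (T2 τ) p / T2 τ p - T1 (T3 τ) p / T3 τ p))
    ∧ (D1 ε (fun q => Real.exp (D2 ε u q)) p
        - D2 ε (fun q => Real.exp (D1 ε u q)) p
        + D3 ε (fun q => Real.exp (D1 ε u q) - Real.exp (D2 ε u q)) p = 0
      ↔ T1 (fun q => T2 τ q / τ q) p - T3 (fun q => T2 τ q / τ q) p
        = T2 (fun q => T1 τ q / τ q) p - T3 (fun q => T1 τ q / τ q) p) := by
  simp only [exp_D1_eq_T1_div hτ, exp_D2_eq_T2_div hτ]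
  -- the shifted quotients agree definitionally, e.g. `T₃ (T₂τ/τ) p = T₂(T₃τ) p / T₃τ p`
  exact ⟨mul_conservation_eq_toda_defect hε.ne' _ _ p,
    conservation_eq_zero_iff_toda hε.ne' _ _ p⟩
end
end

section
/- Let ε > 0 and let u : ℤ³ → ℝ satisfy the Schwarzian KP equation (T₂Δ₁u)(T₃Δ₂u)(T₁Δ₃u) = (T₂Δ₃u)(T₃Δ₁u)(T₁Δ₂u) at every lattice point. Assume moreover that at every lattice point Δ₁u ≠ 0 and the quantities 1 − Δ₃u/Δ₁u and Δ₂u/Δ₁u − 1 are positive. Then the discrete conservation law Δ₂ log(1 − Δ₃u/Δ₁u) − Δ₃ log(Δ₂u/Δ₁u − 1) = 0 holds at every lattice point. -/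
noncomputable section

/-! Put `A = 1 − Δ₃u/Δ₁u` and `B = Δ₂u/Δ₁u − 1`. Written out in the values of `u` on a unit cube,
`T₂A · B` and `T₃B · A` are products of differences of `u`, and after clearing denominators their
equality is exactly the Schwarzian KP equation. Taking logarithms of `T₂A · B = T₃B · A` gives
`T₂ log A − log A = T₃ log B − log B`, which is the conservation law. -/

open Real

theorem T2_mul_eq_T3_mul_of_schwarzianKP {ε : ℝ} {u : ℤ × ℤ × ℤ → ℝ} {p : ℤ × ℤ × ℤ}
    (hSKP : T2 (D1 ε u) p * T3 (D2 ε u) p * T1 (D3 ε u) p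
        = T2 (D3 ε u) p * T3 (D1 ε u) p * T1 (D2 ε u) p)
    (h1 : ∀ q, D1 ε u q ≠ 0) :
    T2 (fun q => 1 - D3 ε u q / D1 ε u q) p * (D2 ε u p / D1 ε u p - 1)
      = T3 (fun q => D2 ε u q / D1 ε u q - 1) p * (1 - D3 ε u p / D1 ε u p) := by
  obtain ⟨i, j, k⟩ := p
  obtain ⟨ha, hε⟩ := div_ne_zero_iff.mp (h1 (i, j, k))
  have ha₂ := (div_ne_zero_iff.mp (h1 (i, j + 1, k))).1
  have ha₃ := (div_ne_zero_iff.mp (h1 (i, j, k + 1))).1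
  simp only [D1, D2, D3, T1, T2, T3] at hSKP ha ha₂ ha₃ ⊢
  field_simp at hSKP ⊢
  linear_combination hSKP

theorem D2_log_sub_D3_log_eq_zero (ε : ℝ) {f g : ℤ × ℤ × ℤ → ℝ}
    (hf : ∀ p, f p ≠ 0) (hg : ∀ p, g p ≠ 0) (h : ∀ p, T2 f p * g p = T3 g p * f p)
    (p : ℤ × ℤ × ℤ) :
    D2 ε (fun q => log (f q)) p - D3 ε (fun q => log (g q)) p = 0 := by
  have hlog := congrArg log (h p)
  simp only [D2, D3, T2, T3] at hlog ⊢
  rw [log_mul (hf _) (hg p), log_mul (hg _) (hf p)] at hlog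
  rw [div_sub_div_same, div_eq_zero_iff]
  left
  linarith

theorem schwarzian_KP_conservation_general (ε : ℝ) (u : ℤ × ℤ × ℤ → ℝ)
    (hSKP : ∀ p : ℤ × ℤ × ℤ,
      T2 (D1 ε u) p * T3 (D2 ε u) p * T1 (D3 ε u) p
        = T2 (D3 ε u) p * T3 (D1 ε u) p * T1 (D2 ε u) p)
    (h1 : ∀ p : ℤ × ℤ × ℤ, D1 ε u p ≠ 0)
    (h31 : ∀ p : ℤ × ℤ × ℤ, 0 < 1 - D3 ε u p / D1 ε u p)
    (h21 : ∀ p : ℤ × ℤ × ℤ, 0 < D2 ε u p / D1 ε u p - 1) :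
    ∀ p : ℤ × ℤ × ℤ,
      D2 ε (fun q => Real.log (1 - D3 ε u q / D1 ε u q)) p
        - D3 ε (fun q => Real.log (D2 ε u q / D1 ε u q - 1)) p = 0 :=
  D2_log_sub_D3_log_eq_zero ε (fun q => (h31 q).ne') (fun q => (h21 q).ne')
    fun q => T2_mul_eq_T3_mul_of_schwarzianKP (hSKP q) h1

/-- If `u` satisfies the Schwarzian KP equation everywhere, `Δ₁u ≠ 0`, and the
quantities `1 − Δ₃u/Δ₁u` and `Δ₂u/Δ₁u − 1` are everywhere positive, then the
discrete conservation law
`Δ₂ log(1 − Δ₃u/Δ₁u) − Δ₃ log(Δ₂u/Δ₁u − 1) = 0` holds everywhere. -/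
theorem schwarzian_KP_conservation (ε : ℝ) (hε : 0 < ε) (u : ℤ × ℤ × ℤ → ℝ)
    (hSKP : ∀ p : ℤ × ℤ × ℤ,
      T2 (D1 ε u) p * T3 (D2 ε u) p * T1 (D3 ε u) p
        = T2 (D3 ε u) p * T3 (D1 ε u) p * T1 (D2 ε u) p)
    (h1 : ∀ p : ℤ × ℤ × ℤ, D1 ε u p ≠ 0)
    (h31 : ∀ p : ℤ × ℤ × ℤ, 0 < 1 - D3 ε u p / D1 ε u p)
    (h21 : ∀ p : ℤ × ℤ × ℤ, 0 < D2 ε u p / D1 ε u p - 1) :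
    ∀ p : ℤ × ℤ × ℤ,
      D2 ε (fun q => Real.log (1 - D3 ε u q / D1 ε u q)) p
        - D3 ε (fun q => Real.log (D2 ε u q / D1 ε u q - 1)) p = 0 :=
  schwarzian_KP_conservation_general ε u hSKP h1 h31 h21
end
end

section
/- For all real numbers x, y, z the algebraic identity (x²y²z² − x² − y² − z²)² − 4(y²z² + x²y² + x²z² − 2x²y²z²) = (xyz + x + y + z)(xyz − x − y + z)(xyz − x + y − z)(xyz + x − y − z) holds. Consequently, writing x = e^{v₂₃}, y = e^{v₁₃}, z = e^{v₁₂} and u = 2v, the dispersionless CKP relation (e^{u₂₃+u₁₃+u₁₂} − e^{u₂₃} − e^{u₁₃} − e^{u₁₂})² − 4(e^{u₁₃+u₂₃} + e^{u₁₂+u₁₃} + e^{u₁₂+u₂₃} − 2e^{u₂₃+u₁₃+u₁₂}) decouples into the product of the four dispersionless BKP-type factors (e^{v₂₃+v₁₃+v₁₂} ± e^{v₂₃} ± e^{v₁₃} ± e^{v₁₂}) with an even number of minus signs distributed as above. -/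
noncomputable section

theorem ckp_factorization {R : Type*} [CommRing R] (x y z : R) :
    (x ^ 2 * y ^ 2 * z ^ 2 - x ^ 2 - y ^ 2 - z ^ 2) ^ 2
        - 4 * (y ^ 2 * z ^ 2 + x ^ 2 * y ^ 2 + x ^ 2 * z ^ 2 - 2 * x ^ 2 * y ^ 2 * z ^ 2)
      = (x * y * z + x + y + z) * (x * y * z - x - y + z) * (x * y * z - x + y - z)
        * (x * y * z + x - y - z) := by
  ring

theorem Real.exp_two_mul_eq_sq (a : ℝ) : Real.exp (2 * a) = Real.exp a ^ 2 := by
  rw [two_mul, Real.exp_add, sq]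

/-- The algebraic identity behind the decoupling of the dispersionless CKP
equation into four dispersionless BKP-type factors: first the polynomial
identity in `x, y, z`, then its exponential specialisation with
`x = e^{v₂₃}, y = e^{v₁₃}, z = e^{v₁₂}` and `uᵢⱼ = 2vᵢⱼ`. -/
theorem ckp_decoupling :
    (∀ x y z : ℝ,
      (x ^ 2 * y ^ 2 * z ^ 2 - x ^ 2 - y ^ 2 - z ^ 2) ^ 2
        - 4 * (y ^ 2 * z ^ 2 + x ^ 2 * y ^ 2 + x ^ 2 * z ^ 2 - 2 * x ^ 2 * y ^ 2 * z ^ 2)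
      = (x * y * z + x + y + z) * (x * y * z - x - y + z) * (x * y * z - x + y - z)
        * (x * y * z + x - y - z))
    ∧ (∀ v23 v13 v12 : ℝ,
      (Real.exp (2 * v23 + 2 * v13 + 2 * v12) - Real.exp (2 * v23) - Real.exp (2 * v13)
          - Real.exp (2 * v12)) ^ 2
        - 4 * (Real.exp (2 * v13 + 2 * v23) + Real.exp (2 * v12 + 2 * v13)
            + Real.exp (2 * v12 + 2 * v23) - 2 * Real.exp (2 * v23 + 2 * v13 + 2 * v12))
      = (Real.exp (v23 + v13 + v12) + Real.exp v23 + Real.exp v13 + Real.exp v12)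
        * (Real.exp (v23 + v13 + v12) - Real.exp v23 - Real.exp v13 + Real.exp v12)
        * (Real.exp (v23 + v13 + v12) - Real.exp v23 + Real.exp v13 - Real.exp v12)
        * (Real.exp (v23 + v13 + v12) + Real.exp v23 - Real.exp v13 - Real.exp v12)) := by
  refine ⟨ckp_factorization, fun v23 v13 v12 => ?_⟩
  simp only [Real.exp_add, Real.exp_two_mul_eq_sq]
  linear_combination ckp_factorization (Real.exp v23) (Real.exp v13) (Real.exp v12)
end
end

section
/- Let f, g : ℝ → ℝ be twice continuously differentiable, let μ, λ : ℝ → ℝ be continuously differentiable, and suppose the dispersion relation λ(s)² = f′(s) + g′(s)·μ(s)² holds for all s ∈ ℝ. Let R : ℝ³ → ℝ (coordinates (x, y, t)) be twice continuously differentiable and satisfy the pair of Hopf-type equations ∂_y R = μ(R)·∂_x R and ∂_t R = λ(R)·∂_x R at every point. Then u = R is a solution of the quasilinear wave-type equation ∂_t² u − ∂_x²(f ∘ u) − ∂_y²(g ∘ u) = 0 at every point. -/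
noncomputable section

/-- Partial derivative in the first coordinate `x` of a function on ℝ³ with
coordinates `(x, y, t)`. -/
def px (F : ℝ × ℝ × ℝ → ℝ) : ℝ × ℝ × ℝ → ℝ :=
  fun p => deriv (fun s => F (s, p.2.1, p.2.2)) p.1

/-- Partial derivative in the second coordinate `y`. -/
def py (F : ℝ × ℝ × ℝ → ℝ) : ℝ × ℝ × ℝ → ℝ :=
  fun p => deriv (fun s => F (p.1, s, p.2.2)) p.2.1

/-- Partial derivative in the third coordinate `t`. -/
def pt (F : ℝ × ℝ × ℝ → ℝ) : ℝ × ℝ × ℝ → ℝ :=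
  fun p => deriv (fun s => F (p.1, p.2.1, s)) p.2.2

/-!
Write `∂_v` for the directional derivative. If `∂_w R = μ(R) ∂_v R`, then, by the symmetry of
second derivatives, `∂_w (φ(R) ∂_v R) = ∂_v ((φ μ)(R) ∂_v R)` for every `φ`. Applied with the
`x`-direction as `v`, this puts all three second derivatives in conservation form:
`R_tt = ∂_x (λ²(R) R_x)`, `(f ∘ R)_xx = ∂_x (f'(R) R_x)` and `(g ∘ R)_yy = ∂_x ((g' μ²)(R) R_x)`.
The dispersion relation `λ² = f' + g' μ²` then makes the three densities cancel.
-/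

section

variable {E : Type*} [NormedAddCommGroup E] [NormedSpace ℝ E] {R : E → ℝ} {p : E}

theorem deriv_comp_eq_lineDeriv (F : E → ℝ) {ι : ℝ → E} {a : ℝ} {v : E}
    (hι : ∀ t, ι (a + t) = ι a + t • v) :
    deriv (fun s => F (ι s)) a = lineDeriv ℝ F (ι a) v := by
  rw [lineDeriv, ← funext fun t => congrArg F (hι t), deriv_comp_const_add (fun s => F (ι s)),
    add_zero]

theorem lineDeriv_comp {φ : ℝ → ℝ} (hφ : DifferentiableAt ℝ φ (R p))
    (hR : DifferentiableAt ℝ R p) (v : E) :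
    lineDeriv ℝ (fun q => φ (R q)) p v = deriv φ (R p) * lineDeriv ℝ R p v := by
  rw [hR.lineDeriv_eq_fderiv]
  exact ((hφ.hasDerivAt.comp_hasFDerivAt p hR.hasFDerivAt).hasLineDerivAt v).lineDeriv

theorem lineDeriv_fun_mul {a b : E → ℝ} (ha : DifferentiableAt ℝ a p)
    (hb : DifferentiableAt ℝ b p) (v : E) :
    lineDeriv ℝ (fun q => a q * b q) p v = a p * lineDeriv ℝ b p v + b p * lineDeriv ℝ a p v := by
  rw [ha.lineDeriv_eq_fderiv, hb.lineDeriv_eq_fderiv]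
  exact ((ha.hasFDerivAt.mul hb.hasFDerivAt).hasLineDerivAt v).lineDeriv

theorem Differentiable.lineDeriv_eq_fderiv (hR : Differentiable ℝ R) (v : E) :
    (fun q => lineDeriv ℝ R q v) = fun q => fderiv ℝ R q v :=
  funext fun q => (hR q).lineDeriv_eq_fderiv

theorem ContDiff.differentiable_lineDeriv (hR : ContDiff ℝ 2 R) (v : E) :
    Differentiable ℝ (fun q => lineDeriv ℝ R q v) := by
  rw [(hR.differentiable two_ne_zero).lineDeriv_eq_fderiv]
  exact ((hR.fderiv_right (m := 1) le_rfl).differentiable one_ne_zero).clm_apply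
    (differentiable_const v)

theorem ContDiff.lineDeriv_lineDeriv_comm (hR : ContDiff ℝ 2 R) (p v w : E) :
    lineDeriv ℝ (fun q => lineDeriv ℝ R q v) p w =
      lineDeriv ℝ (fun q => lineDeriv ℝ R q w) p v := by
  have hRd := hR.differentiable two_ne_zero
  have hR' : Differentiable ℝ (fderiv ℝ R) :=
    (hR.fderiv_right (m := 1) le_rfl).differentiable one_ne_zero
  rw [(hR.differentiable_lineDeriv v p).lineDeriv_eq_fderiv,
    (hR.differentiable_lineDeriv w p).lineDeriv_eq_fderiv, hRd.lineDeriv_eq_fderiv,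
    hRd.lineDeriv_eq_fderiv, fderiv_clm_apply (hR' p) (differentiableAt_const v),
    fderiv_clm_apply (hR' p) (differentiableAt_const w)]
  simpa using hR.contDiffAt.isSymmSndFDerivAt (by simp) w v

theorem ContDiff.lineDeriv_comp_mul_lineDeriv (hR : ContDiff ℝ 2 R) {φ : ℝ → ℝ}
    (hφ : DifferentiableAt ℝ φ (R p)) (v w : E) :
    lineDeriv ℝ (fun q => φ (R q) * lineDeriv ℝ R q v) p w =
      deriv φ (R p) * lineDeriv ℝ R p w * lineDeriv ℝ R p v +
        φ (R p) * lineDeriv ℝ (fun q => lineDeriv ℝ R q v) p w := by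
  have hRp := hR.differentiable two_ne_zero p
  rw [lineDeriv_fun_mul (a := fun q => φ (R q)) (hφ.comp p hRp) (hR.differentiable_lineDeriv v p),
    lineDeriv_comp hφ hRp]
  ring

theorem ContDiff.lineDeriv_comp_mul_lineDeriv_of_hopf (hR : ContDiff ℝ 2 R) {φ μ : ℝ → ℝ}
    (hφ : DifferentiableAt ℝ φ (R p)) (hμ : DifferentiableAt ℝ μ (R p)) {v w : E}
    (hopf : ∀ q, lineDeriv ℝ R q w = μ (R q) * lineDeriv ℝ R q v) :
    lineDeriv ℝ (fun q => φ (R q) * lineDeriv ℝ R q v) p w =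
      lineDeriv ℝ (fun q => φ (R q) * μ (R q) * lineDeriv ℝ R q v) p v := by
  have hR_vw : lineDeriv ℝ (fun q => lineDeriv ℝ R q v) p w =
      lineDeriv ℝ (fun q => μ (R q) * lineDeriv ℝ R q v) p v := by
    rw [hR.lineDeriv_lineDeriv_comm, funext hopf]
  rw [hR.lineDeriv_comp_mul_lineDeriv hφ, hR_vw, hR.lineDeriv_comp_mul_lineDeriv hμ,
    hR.lineDeriv_comp_mul_lineDeriv (φ := fun s => φ s * μ s) (hφ.mul hμ),
    deriv_fun_mul hφ hμ, hopf]
  ring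

end

theorem px_eq_lineDeriv (F : ℝ × ℝ × ℝ → ℝ) : px F = fun p => lineDeriv ℝ F p (1, 0, 0) :=
  funext fun p => deriv_comp_eq_lineDeriv F (ι := fun s => (s, p.2.1, p.2.2))
    fun t => by ext <;> simp

theorem py_eq_lineDeriv (F : ℝ × ℝ × ℝ → ℝ) : py F = fun p => lineDeriv ℝ F p (0, 1, 0) :=
  funext fun p => deriv_comp_eq_lineDeriv F (ι := fun s => (p.1, s, p.2.2))
    fun t => by ext <;> simp

theorem pt_eq_lineDeriv (F : ℝ × ℝ × ℝ → ℝ) : pt F = fun p => lineDeriv ℝ F p (0, 0, 1) :=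
  funext fun p => deriv_comp_eq_lineDeriv F (ι := fun s => (p.1, p.2.1, s))
    fun t => by ext <;> simp

/-- One-phase hydrodynamic reductions: if `R` satisfies the pair of Hopf-type
equations `R_y = μ(R) R_x`, `R_t = λ(R) R_x` with dispersion relation
`λ² = f′ + g′ μ²`, then `u = R` solves the quasilinear wave-type equation
`u_tt − (f∘u)_xx − (g∘u)_yy = 0`. -/
theorem one_phase_reduction (f g μ lam : ℝ → ℝ)
    (hf : ContDiff ℝ 2 f) (hg : ContDiff ℝ 2 g)
    (hμ : ContDiff ℝ 1 μ) (hlam : ContDiff ℝ 1 lam)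
    (hdisp : ∀ s : ℝ, (lam s) ^ 2 = deriv f s + deriv g s * (μ s) ^ 2)
    (R : ℝ × ℝ × ℝ → ℝ) (hR : ContDiff ℝ 2 R)
    (hy : ∀ p : ℝ × ℝ × ℝ, py R p = μ (R p) * px R p)
    (ht : ∀ p : ℝ × ℝ × ℝ, pt R p = lam (R p) * px R p) :
    ∀ p : ℝ × ℝ × ℝ,
      pt (pt R) p - px (px (fun q => f (R q))) p - py (py (fun q => g (R q))) p = 0 := by
  intro p
  simp only [px_eq_lineDeriv, py_eq_lineDeriv, pt_eq_lineDeriv] at hy ht ⊢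
  set e₁ : ℝ × ℝ × ℝ := (1, 0, 0)
  have hRd := hR.differentiable two_ne_zero
  have hμd := hμ.differentiable one_ne_zero
  have hlamd := hlam.differentiable one_ne_zero
  have hf'd := hf.differentiable_deriv_two
  have hg'μμd : DifferentiableAt ℝ (fun s => deriv g s * μ s * μ s) (R p) :=
    ((hg.differentiable_deriv_two _).mul (hμd _)).mul (hμd _)
  have hR_tt : lineDeriv ℝ (fun q => lineDeriv ℝ R q (0, 0, 1)) p (0, 0, 1) =
      lineDeriv ℝ (fun q => lam (R q) * lam (R q) * lineDeriv ℝ R q e₁) p e₁ := by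
    rw [funext ht]
    exact hR.lineDeriv_comp_mul_lineDeriv_of_hopf (hlamd _) (hlamd _) ht
  have hf_x : (fun q => lineDeriv ℝ (fun q' => f (R q')) q e₁) =
      fun q => deriv f (R q) * lineDeriv ℝ R q e₁ :=
    funext fun q => lineDeriv_comp (hf.differentiable two_ne_zero _) (hRd q) e₁
  have hg_yy : lineDeriv ℝ (fun q => lineDeriv ℝ (fun q' => g (R q')) q (0, 1, 0)) p (0, 1, 0) =
      lineDeriv ℝ (fun q => deriv g (R q) * μ (R q) * μ (R q) * lineDeriv ℝ R q e₁) p e₁ := by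
    have hg_y : (fun q => lineDeriv ℝ (fun q' => g (R q')) q (0, 1, 0)) =
        fun q => deriv g (R q) * μ (R q) * lineDeriv ℝ R q e₁ := funext fun q => by
      rw [lineDeriv_comp (hg.differentiable two_ne_zero _) (hRd q), hy, mul_assoc]
    rw [hg_y]
    exact hR.lineDeriv_comp_mul_lineDeriv_of_hopf (φ := fun s => deriv g s * μ s)
      ((hg.differentiable_deriv_two _).mul (hμd _)) (hμd _) hy
  have hdisp' : (fun s => lam s * lam s) = fun s => deriv f s + deriv g s * μ s * μ s :=
    funext fun s => by linear_combination hdisp s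
  rw [hR_tt, hf_x, hg_yy, hR.lineDeriv_comp_mul_lineDeriv (φ := fun s => lam s * lam s)
    ((hlamd _).mul (hlamd _)), hR.lineDeriv_comp_mul_lineDeriv (hf'd _),
    hR.lineDeriv_comp_mul_lineDeriv hg'μμd, hdisp', deriv_fun_add (hf'd _) hg'μμd]
  linear_combination lineDeriv ℝ (fun q => lineDeriv ℝ R q e₁) p e₁ * hdisp (R p)
end
end

section
/- Let α, β, γ be real constants and set P(s) = αs² + βs + γ. Let p, q, r : ℝ → ℝ be differentiable functions satisfying p′ = P ∘ p, q′ = P ∘ q, r′ = P ∘ r (so that p, q, r are automatically twice differentiable). Then for all a, b, c ∈ ℝ such that p(a), q(b), r(c) are pairwise distinct, the three integrability conditions hold: p″(a) = p′(a)·[(p′(a) − q′(b))/(p(a) − q(b)) + (p′(a) − r′(c))/(p(a) − r(c)) − (q′(b) − r′(c))/(q(b) − r(c))], q″(b) = q′(b)·[(q′(b) − p′(a))/(q(b) − p(a)) + (q′(b) − r′(c))/(q(b) − r(c)) − (p′(a) − r′(c))/(p(a) − r(c))], and r″(c) = r′(c)·[(r′(c) − p′(a))/(r(c) − p(a)) +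 (r′(c) − q′(b))/(r(c) − q(b)) − (p′(a) − q′(b))/(p(a) − q(b))]. -/
/-!
Differentiating `y′ = P(y)` once gives `y″ = P′(y) y′` for each of `p, q, r`. For a quadratic
`P`, the divided difference `(P u - P v) / (u - v) = α (u + v) + β` is linear in `u + v`, so
`P′(u) = 2αu + β` is the combination `P[u, v] + P[u, w] - P[v, w]` of the divided differences
at any two further points `v, w`; each integrability condition is this identity at
`u, v, w = p a, q b, r c` in the appropriate order.
-/

lemma hasDerivAt_quadratic (α β γ x : ℝ) :
    HasDerivAt (fun s => α * s ^ 2 + β * s + γ) (2 * α * x + β) x := by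
  have h := ((((hasDerivAt_id' x).pow 2).const_mul α).add
    ((hasDerivAt_id' x).const_mul β)).add_const γ
  exact h.congr_deriv (by push_cast; ring)

lemma deriv_deriv_of_deriv_eq_quadratic {α β γ a : ℝ} {p : ℝ → ℝ}
    (hp : DifferentiableAt ℝ p a) (hp' : ∀ s, deriv p s = α * p s ^ 2 + β * p s + γ) :
    deriv (deriv p) a = deriv p a * (2 * α * p a + β) := by
  have hderiv : deriv p = (fun s => α * s ^ 2 + β * s + γ) ∘ p := funext hp'
  have hquad := hasDerivAt_quadratic α β γ (p a)
  rw [hderiv, deriv_comp a hquad.differentiableAt hp, hquad.deriv, ← hderiv, mul_comm]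

lemma quadratic_divided_difference {α β γ x y : ℝ} (hxy : x ≠ y) :
    ((α * x ^ 2 + β * x + γ) - (α * y ^ 2 + β * y + γ)) / (x - y) = α * (x + y) + β := by
  rw [div_eq_iff (sub_ne_zero.mpr hxy)]
  ring

lemma quadratic_deriv_eq_divided_differences {α β γ x y z : ℝ}
    (hxy : x ≠ y) (hxz : x ≠ z) (hyz : y ≠ z) :
    2 * α * x + β =
      ((α * x ^ 2 + β * x + γ) - (α * y ^ 2 + β * y + γ)) / (x - y)
        + ((α * x ^ 2 + β * x + γ) - (α * z ^ 2 + β * z + γ)) / (x - z)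
        - ((α * y ^ 2 + β * y + γ) - (α * z ^ 2 + β * z + γ)) / (y - z) := by
  rw [quadratic_divided_difference hxy, quadratic_divided_difference hxz,
    quadratic_divided_difference hyz]
  ring

/-- If `p, q, r` all satisfy the same Riccati-type ODE `y′ = α y² + β y + γ`,
then they satisfy the three integrability conditions of the quasilinear
equation `[p(u₁) − q(u₂)]u₁₂ + [r(u₃) − p(u₁)]u₁₃ + [q(u₂) − r(u₃)]u₂₃ = 0`
wherever `p(a), q(b), r(c)` are pairwise distinct. -/
theorem riccati_integrability_conditions (α β γ : ℝ) (p q r : ℝ → ℝ)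
    (hp : Differentiable ℝ p) (hq : Differentiable ℝ q) (hr : Differentiable ℝ r)
    (hp' : ∀ s : ℝ, deriv p s = α * (p s) ^ 2 + β * p s + γ)
    (hq' : ∀ s : ℝ, deriv q s = α * (q s) ^ 2 + β * q s + γ)
    (hr' : ∀ s : ℝ, deriv r s = α * (r s) ^ 2 + β * r s + γ) :
    ∀ a b c : ℝ, p a ≠ q b → p a ≠ r c → q b ≠ r c →
      (deriv (deriv p) a = deriv p a *
          ((deriv p a - deriv q b) / (p a - q b) + (deriv p a - deriv r c) / (p a - r c)
            - (deriv q b - deriv r c) / (q b - r c)))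
      ∧ (deriv (deriv q) b = deriv q b *
          ((deriv q b - deriv p a) / (q b - p a) + (deriv q b - deriv r c) / (q b - r c)
            - (deriv p a - deriv r c) / (p a - r c)))
      ∧ (deriv (deriv r) c = deriv r c *
          ((deriv r c - deriv p a) / (r c - p a) + (deriv r c - deriv q b) / (r c - q b)
            - (deriv p a - deriv q b) / (p a - q b))) := by
  intro a b c hpq hpr hqr
  rw [deriv_deriv_of_deriv_eq_quadratic (hp a) hp', deriv_deriv_of_deriv_eq_quadratic (hq b) hq',
    deriv_deriv_of_deriv_eq_quadratic (hr c) hr', hp' a, hq' b, hr' c]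
  exact ⟨by rw [quadratic_deriv_eq_divided_differences hpq hpr hqr],
    by rw [quadratic_deriv_eq_divided_differences hpq.symm hqr hpr],
    by rw [quadratic_deriv_eq_divided_differences hpr.symm hqr.symm hpq]⟩
end

section
/- Let I₁, I₂, I₃ ⊆ ℝ be open intervals and let p : I₁ → ℝ, q : I₂ → ℝ, r : I₃ → ℝ be three times continuously differentiable functions whose derivatives p′, q′, r′ are nowhere zero, and suppose that for all a ∈ I₁, b ∈ I₂, c ∈ I₃ the values p(a), q(b), r(c) are pairwise distinct and the three integrability conditions hold: p″ = p′[(p′−q′)/(p−q) + (p′−r′)/(p−r) − (q′−r′)/(q−r)], q″ = q′[(q′−p′)/(q−p) + (q′−r′)/(q−r) − (p′−r′)/(p−r)], r″ = r′[(r′−p′)/(r−p) + (r′−q′)/(r−q) − (p′−q′)/(p−q)] (evaluated at (a, b, c)). Then there exist real constants α, β, γ such that p′ = α p² + β p + γ on I₁, q′ = α q² + β q + γ on I₂, and r′ = α r² + β r + γ on I₃. -/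
/-!
For a quadratic `f` and distinct `x₁, x₂, x₃` one has `f′(x₁) = f[x₁,x₂] + f[x₁,x₃] − f[x₂,x₃]`.
Hence the first integrability condition says that `p″(a) / p′(a)` is the slope at `p(a)` of the
quadratic `f_{abc}` through `(p a, p′ a)`, `(q b, q′ b)`, `(r c, r′ c)`, and the second that
`q″(b) / q′(b)` is its slope at `q(b)`. A quadratic is determined by its values at two points and
its slope at one of them, so `f_{abc}` does not change when `b` varies (keep the data at `p a` and
`r c`), when `a` varies (keep the data at `q b` and `r c`), or when `c` varies (keep the data at
`p a` and `q b`). The single quadratic `f` so obtained satisfies `p′ = f ∘ p`, `q′ = f ∘ q`,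
`r′ = f ∘ r`.
-/

@[ext]
structure Quadratic where
  α : ℝ
  β : ℝ
  γ : ℝ

namespace Quadratic

def eval (f : Quadratic) (t : ℝ) : ℝ := f.α * t ^ 2 + f.β * t + f.γ

def evalDeriv (f : Quadratic) (t : ℝ) : ℝ := 2 * f.α * t + f.β

theorem evalDeriv_eq_divDiff (f : Quadratic) {x₁ x₂ x₃ : ℝ}
    (h₁₂ : x₁ ≠ x₂) (h₁₃ : x₁ ≠ x₃) (h₂₃ : x₂ ≠ x₃) :
    f.evalDeriv x₁ = (f.eval x₁ - f.eval x₂) / (x₁ - x₂) + (f.eval x₁ - f.eval x₃) / (x₁ - x₃)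
      - (f.eval x₂ - f.eval x₃) / (x₂ - x₃) := by
  have := sub_ne_zero.2 h₁₂
  have := sub_ne_zero.2 h₁₃
  have := sub_ne_zero.2 h₂₃
  simp only [eval, evalDeriv]
  field_simp
  ring

theorem eq_of_eval_eq_of_evalDeriv_eq {f g : Quadratic} {x z : ℝ} (hxz : x ≠ z)
    (hx : f.eval x = g.eval x) (hz : f.eval z = g.eval z)
    (hx' : f.evalDeriv x = g.evalDeriv x) : f = g := by
  simp only [eval, evalDeriv] at hx hz hx'
  have h : (f.α - g.α) * (x - z) ^ 2 = 0 := by linear_combination hz - hx + (x - z) * hx'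
  have hα : f.α = g.α := by simpa [sub_eq_zero, hxz] using h
  have hβ : f.β = g.β := by rw [hα] at hx'; linarith
  ext
  · exact hα
  · exact hβ
  · rw [hα, hβ] at hx; linarith

noncomputable def interpolate (x₁ y₁ x₂ y₂ x₃ y₃ : ℝ) : Quadratic :=
  let d₁₂ := (y₁ - y₂) / (x₁ - x₂)
  let α := (d₁₂ - (y₂ - y₃) / (x₂ - x₃)) / (x₁ - x₃)
  let β := d₁₂ - α * (x₁ + x₂)
  ⟨α, β, y₁ - α * x₁ ^ 2 - β * x₁⟩

section Interpolate

variable {x₁ y₁ x₂ y₂ x₃ y₃ : ℝ}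

theorem eval_interpolate_left : (interpolate x₁ y₁ x₂ y₂ x₃ y₃).eval x₁ = y₁ := by
  simp only [interpolate, eval]
  ring

theorem eval_interpolate_middle (h₁₂ : x₁ ≠ x₂) :
    (interpolate x₁ y₁ x₂ y₂ x₃ y₃).eval x₂ = y₂ := by
  have := sub_ne_zero.2 h₁₂
  simp only [interpolate, eval]
  field_simp
  ring

theorem eval_interpolate_right (h₁₂ : x₁ ≠ x₂) (h₁₃ : x₁ ≠ x₃) (h₂₃ : x₂ ≠ x₃) :
    (interpolate x₁ y₁ x₂ y₂ x₃ y₃).eval x₃ = y₃ := by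
  have := sub_ne_zero.2 h₁₂
  have := sub_ne_zero.2 h₁₃
  have := sub_ne_zero.2 h₂₃
  simp only [interpolate, eval]
  field_simp
  ring

theorem evalDeriv_interpolate_left (h₁₂ : x₁ ≠ x₂) (h₁₃ : x₁ ≠ x₃) (h₂₃ : x₂ ≠ x₃) :
    (interpolate x₁ y₁ x₂ y₂ x₃ y₃).evalDeriv x₁
      = (y₁ - y₂) / (x₁ - x₂) + (y₁ - y₃) / (x₁ - x₃) - (y₂ - y₃) / (x₂ - x₃) := by
  rw [evalDeriv_eq_divDiff _ h₁₂ h₁₃ h₂₃, eval_interpolate_left, eval_interpolate_middle h₁₂,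
    eval_interpolate_right h₁₂ h₁₃ h₂₃]

theorem evalDeriv_interpolate_middle (h₁₂ : x₁ ≠ x₂) (h₁₃ : x₁ ≠ x₃) (h₂₃ : x₂ ≠ x₃) :
    (interpolate x₁ y₁ x₂ y₂ x₃ y₃).evalDeriv x₂
      = (y₂ - y₁) / (x₂ - x₁) + (y₂ - y₃) / (x₂ - x₃) - (y₁ - y₃) / (x₁ - x₃) := by
  rw [evalDeriv_eq_divDiff _ h₁₂.symm h₂₃ h₁₃, eval_interpolate_left, eval_interpolate_middle h₁₂,
    eval_interpolate_right h₁₂ h₁₃ h₂₃]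

theorem exists_eval_eq_of_evalDeriv_interpolate {ι : Type*} {s₁ s₂ s₃ : Set ι}
    (hs₁ : s₁.Nonempty) (hs₂ : s₂.Nonempty) (hs₃ : s₃.Nonempty)
    {x₁ y₁ κ₁ x₂ y₂ κ₂ x₃ y₃ : ι → ℝ}
    (hx : ∀ a ∈ s₁, ∀ b ∈ s₂, ∀ c ∈ s₃, x₁ a ≠ x₂ b ∧ x₁ a ≠ x₃ c ∧ x₂ b ≠ x₃ c)
    (hκ₁ : ∀ a ∈ s₁, ∀ b ∈ s₂, ∀ c ∈ s₃,
      (interpolate (x₁ a) (y₁ a) (x₂ b) (y₂ b) (x₃ c) (y₃ c)).evalDeriv (x₁ a) = κ₁ a)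
    (hκ₂ : ∀ a ∈ s₁, ∀ b ∈ s₂, ∀ c ∈ s₃,
      (interpolate (x₁ a) (y₁ a) (x₂ b) (y₂ b) (x₃ c) (y₃ c)).evalDeriv (x₂ b) = κ₂ b) :
    ∃ f : Quadratic, (∀ a ∈ s₁, f.eval (x₁ a) = y₁ a) ∧ (∀ b ∈ s₂, f.eval (x₂ b) = y₂ b) ∧
      (∀ c ∈ s₃, f.eval (x₃ c) = y₃ c) := by
  obtain ⟨a₀, ha₀⟩ := hs₁
  obtain ⟨b₀, hb₀⟩ := hs₂
  obtain ⟨c₀, hc₀⟩ := hs₃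
  let F a b c := interpolate (x₁ a) (y₁ a) (x₂ b) (y₂ b) (x₃ c) (y₃ c)
  have eval_F : ∀ a ∈ s₁, ∀ b ∈ s₂, ∀ c ∈ s₃, (F a b c).eval (x₁ a) = y₁ a ∧
      (F a b c).eval (x₂ b) = y₂ b ∧ (F a b c).eval (x₃ c) = y₃ c := by
    intro a ha b hb c hc
    obtain ⟨h₁₂, h₁₃, h₂₃⟩ := hx a ha b hb c hc
    exact ⟨eval_interpolate_left, eval_interpolate_middle h₁₂, eval_interpolate_right h₁₂ h₁₃ h₂₃⟩
  have F_eq : ∀ a ∈ s₁, ∀ b ∈ s₂, ∀ c ∈ s₃, F a b c = F a₀ b₀ c₀ := by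
    intro a ha b hb c hc
    have e := eval_F a ha b hb c hc
    have e₀ := eval_F a₀ ha₀ b hb c hc
    have e₁ := eval_F a₀ ha₀ b₀ hb₀ c hc
    have e₂ := eval_F a₀ ha₀ b₀ hb₀ c₀ hc₀
    calc F a b c = F a₀ b c :=
          eq_of_eval_eq_of_evalDeriv_eq (hx a ha b hb c hc).2.2 (e.2.1.trans e₀.2.1.symm)
            (e.2.2.trans e₀.2.2.symm) ((hκ₂ a ha b hb c hc).trans (hκ₂ a₀ ha₀ b hb c hc).symm)
      _ = F a₀ b₀ c :=
          eq_of_eval_eq_of_evalDeriv_eq (hx a₀ ha₀ b hb c hc).2.1 (e₀.1.trans e₁.1.symm)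
            (e₀.2.2.trans e₁.2.2.symm)
            ((hκ₁ a₀ ha₀ b hb c hc).trans (hκ₁ a₀ ha₀ b₀ hb₀ c hc).symm)
      _ = F a₀ b₀ c₀ :=
          eq_of_eval_eq_of_evalDeriv_eq (hx a₀ ha₀ b₀ hb₀ c hc).1 (e₁.1.trans e₂.1.symm)
            (e₁.2.1.trans e₂.2.1.symm)
            ((hκ₁ a₀ ha₀ b₀ hb₀ c hc).trans (hκ₁ a₀ ha₀ b₀ hb₀ c₀ hc₀).symm)
  refine ⟨F a₀ b₀ c₀, fun a ha => ?_, fun b hb => ?_, fun c hc => ?_⟩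
  · exact F_eq a ha b₀ hb₀ c₀ hc₀ ▸ (eval_F a ha b₀ hb₀ c₀ hc₀).1
  · exact F_eq a₀ ha₀ b hb c₀ hc₀ ▸ (eval_F a₀ ha₀ b hb c₀ hc₀).2.1
  · exact F_eq a₀ ha₀ b₀ hb₀ c hc ▸ (eval_F a₀ ha₀ b₀ hb₀ c hc).2.2

end Interpolate

end Quadratic

open Quadratic

theorem integrability_conditions_imply_riccati_general
    (I₁ I₂ I₃ : Set ℝ)
    (hn₁ : I₁.Nonempty) (hn₂ : I₂.Nonempty) (hn₃ : I₃.Nonempty)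
    (p q r : ℝ → ℝ)
    (hp' : ∀ a ∈ I₁, deriv p a ≠ 0) (hq' : ∀ b ∈ I₂, deriv q b ≠ 0)
    (hdist : ∀ a ∈ I₁, ∀ b ∈ I₂, ∀ c ∈ I₃,
      p a ≠ q b ∧ p a ≠ r c ∧ q b ≠ r c)
    (hint : ∀ a ∈ I₁, ∀ b ∈ I₂, ∀ c ∈ I₃,
      (deriv (deriv p) a = deriv p a *
          ((deriv p a - deriv q b) / (p a - q b) + (deriv p a - deriv r c) / (p a - r c)
            - (deriv q b - deriv r c) / (q b - r c)))
      ∧ (deriv (deriv q) b = deriv q b *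
          ((deriv q b - deriv p a) / (q b - p a) + (deriv q b - deriv r c) / (q b - r c)
            - (deriv p a - deriv r c) / (p a - r c)))
      ∧ (deriv (deriv r) c = deriv r c *
          ((deriv r c - deriv p a) / (r c - p a) + (deriv r c - deriv q b) / (r c - q b)
            - (deriv p a - deriv q b) / (p a - q b)))) :
    ∃ α β γ : ℝ,
      (∀ a ∈ I₁, deriv p a = α * (p a) ^ 2 + β * p a + γ)
      ∧ (∀ b ∈ I₂, deriv q b = α * (q b) ^ 2 + β * q b + γ)
      ∧ (∀ c ∈ I₃, deriv r c = α * (r c) ^ 2 + β * r c + γ) := by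
  obtain ⟨f, hfp, hfq, hfr⟩ := exists_eval_eq_of_evalDeriv_interpolate hn₁ hn₂ hn₃ hdist
    (κ₁ := fun a => deriv (deriv p) a / deriv p a) (κ₂ := fun b => deriv (deriv q) b / deriv q b)
    (fun a ha b hb c hc => by
      obtain ⟨hpq, hpr, hqr⟩ := hdist a ha b hb c hc
      rw [evalDeriv_interpolate_left hpq hpr hqr, (hint a ha b hb c hc).1,
        mul_div_cancel_left₀ _ (hp' a ha)])
    (fun a ha b hb c hc => by
      obtain ⟨hpq, hpr, hqr⟩ := hdist a ha b hb c hc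
      rw [evalDeriv_interpolate_middle hpq hpr hqr, (hint a ha b hb c hc).2.1,
        mul_div_cancel_left₀ _ (hq' b hb)])
  exact ⟨f.α, f.β, f.γ, fun a ha => (hfp a ha).symm, fun b hb => (hfq b hb).symm,
    fun c hc => (hfr c hc).symm⟩

/-- If `p, q, r` are C³ functions on open intervals with nowhere-vanishing
derivatives, pairwise distinct values, and satisfying the integrability
conditions of the quasilinear equation
`[p(u₁) − q(u₂)]u₁₂ + [r(u₃) − p(u₁)]u₁₃ + [q(u₂) − r(u₃)]u₂₃ = 0`, then there
exist constants `α, β, γ` with `p′ = αp² + βp + γ`, `q′ = αq² + βq + γ`,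
`r′ = αr² + βr + γ` on the respective intervals. -/
theorem integrability_conditions_imply_riccati
    (I₁ I₂ I₃ : Set ℝ)
    (hI₁ : IsOpen I₁) (hI₂ : IsOpen I₂) (hI₃ : IsOpen I₃)
    (hc₁ : I₁.OrdConnected) (hc₂ : I₂.OrdConnected) (hc₃ : I₃.OrdConnected)
    (hn₁ : I₁.Nonempty) (hn₂ : I₂.Nonempty) (hn₃ : I₃.Nonempty)
    (p q r : ℝ → ℝ)
    (hp : ContDiffOn ℝ 3 p I₁) (hq : ContDiffOn ℝ 3 q I₂) (hr : ContDiffOn ℝ 3 r I₃)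
    (hp' : ∀ a ∈ I₁, deriv p a ≠ 0) (hq' : ∀ b ∈ I₂, deriv q b ≠ 0)
    (hr' : ∀ c ∈ I₃, deriv r c ≠ 0)
    (hdist : ∀ a ∈ I₁, ∀ b ∈ I₂, ∀ c ∈ I₃,
      p a ≠ q b ∧ p a ≠ r c ∧ q b ≠ r c)
    (hint : ∀ a ∈ I₁, ∀ b ∈ I₂, ∀ c ∈ I₃,
      (deriv (deriv p) a = deriv p a *
          ((deriv p a - deriv q b) / (p a - q b) + (deriv p a - deriv r c) / (p a - r c)
            - (deriv q b - deriv r c) / (q b - r c)))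
      ∧ (deriv (deriv q) b = deriv q b *
          ((deriv q b - deriv p a) / (q b - p a) + (deriv q b - deriv r c) / (q b - r c)
            - (deriv p a - deriv r c) / (p a - r c)))
      ∧ (deriv (deriv r) c = deriv r c *
          ((deriv r c - deriv p a) / (r c - p a) + (deriv r c - deriv q b) / (r c - q b)
            - (deriv p a - deriv q b) / (p a - q b)))) :
    ∃ α β γ : ℝ,
      (∀ a ∈ I₁, deriv p a = α * (p a) ^ 2 + β * p a + γ)
      ∧ (∀ b ∈ I₂, deriv q b = α * (q b) ^ 2 + β * q b + γ)
      ∧ (∀ c ∈ I₃, deriv r c = α * (r c) ^ 2 + β * r c + γ) :=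
  integrability_conditions_imply_riccati_general I₁ I₂ I₃ hn₁ hn₂ hn₃ p q r hp' hq' hdist hint
end

section
/- Let Ω ⊆ ℝ³ be open and let u : Ω → ℝ be twice continuously differentiable. Suppose that on Ω the first derivative u₁ is nonzero and the quantities 1 − u₃/u₁ and u₂/u₁ − 1 are positive, and that u satisfies the dispersionless Schwarzian KP equation u₃(u₂ − u₁)u₁₂ + u₂(u₁ − u₃)u₁₃ + u₁(u₃ − u₂)u₂₃ = 0 on Ω. Then the conservation law ∂₂ log(1 − u₃/u₁) − ∂₃ log(u₂/u₁ − 1) = 0 holds on Ω. -/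
noncomputable section

/-- Partial derivative in the first coordinate of a function on ℝ³. -/
def p1 (F : ℝ × ℝ × ℝ → ℝ) : ℝ × ℝ × ℝ → ℝ :=
  fun p => deriv (fun s => F (s, p.2.1, p.2.2)) p.1

/-- Partial derivative in the second coordinate. -/
def p2 (F : ℝ × ℝ × ℝ → ℝ) : ℝ × ℝ × ℝ → ℝ :=
  fun p => deriv (fun s => F (p.1, s, p.2.2)) p.2.1

/-- Partial derivative in the third coordinate. -/
def p3 (F : ℝ × ℝ × ℝ → ℝ) : ℝ × ℝ × ℝ → ℝ :=
  fun p => deriv (fun s => F (p.1, p.2.1, s)) p.2.2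

/-!
Write `a, b, c` for `u₁, u₂, u₃`. By the chain and quotient rules, the left-hand side of the
conservation law is a rational expression in `a, b, c` and the second derivatives of `u`; once the
mixed partials are identified (Schwarz, for `C²` functions) it is exactly the Schwarzian KP
expression divided by `a (a - c) (b - a)`, hence zero.
-/

open Topology

section SecondDerivative

variable {E G : Type*} [NormedAddCommGroup E] [NormedSpace ℝ E]
  [NormedAddCommGroup G] [NormedSpace ℝ G] {f : E → G} {x : E}

theorem ContDiffAt.differentiableAt_fderiv_apply (hf : ContDiffAt ℝ 2 f x) (v : E) :
    DifferentiableAt ℝ (fun y => fderiv ℝ f y v) x :=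
  ((hf.fderiv_right (m := 1) le_rfl).differentiableAt one_ne_zero).clm_apply
    (differentiableAt_const v)

theorem ContDiffAt.fderiv_fderiv_apply_comm (hf : ContDiffAt ℝ 2 f x) (v w : E) :
    fderiv ℝ (fun y => fderiv ℝ f y v) x w = fderiv ℝ (fun y => fderiv ℝ f y w) x v := by
  have hd : DifferentiableAt ℝ (fderiv ℝ f) x :=
    (hf.fderiv_right (m := 1) le_rfl).differentiableAt one_ne_zero
  rw [fderiv_clm_apply hd (differentiableAt_const v),
    fderiv_clm_apply hd (differentiableAt_const w)]
  simpa using hf.isSymmSndFDerivAt (by simp) w v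

end SecondDerivative

section Partials

variable {F : ℝ × ℝ × ℝ → ℝ} {p : ℝ × ℝ × ℝ}

theorem hasDerivAt_slice₁ (hF : DifferentiableAt ℝ F p) :
    HasDerivAt (fun s => F (s, p.2.1, p.2.2)) (fderiv ℝ F p (1, 0, 0)) p.1 :=
  hF.hasFDerivAt.comp_hasDerivAt _ ((hasDerivAt_id _).prodMk (hasDerivAt_const _ _))

theorem hasDerivAt_slice₂ (hF : DifferentiableAt ℝ F p) :
    HasDerivAt (fun s => F (p.1, s, p.2.2)) (fderiv ℝ F p (0, 1, 0)) p.2.1 :=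
  hF.hasFDerivAt.comp_hasDerivAt _
    ((hasDerivAt_const _ _).prodMk ((hasDerivAt_id _).prodMk (hasDerivAt_const _ _)))

theorem hasDerivAt_slice₃ (hF : DifferentiableAt ℝ F p) :
    HasDerivAt (fun s => F (p.1, p.2.1, s)) (fderiv ℝ F p (0, 0, 1)) p.2.2 :=
  hF.hasFDerivAt.comp_hasDerivAt _
    ((hasDerivAt_const _ _).prodMk ((hasDerivAt_const _ _).prodMk (hasDerivAt_id _)))

theorem p1_eq_fderiv (hF : DifferentiableAt ℝ F p) : p1 F p = fderiv ℝ F p (1, 0, 0) :=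
  (hasDerivAt_slice₁ hF).deriv

theorem p2_eq_fderiv (hF : DifferentiableAt ℝ F p) : p2 F p = fderiv ℝ F p (0, 1, 0) :=
  (hasDerivAt_slice₂ hF).deriv

theorem p3_eq_fderiv (hF : DifferentiableAt ℝ F p) : p3 F p = fderiv ℝ F p (0, 0, 1) :=
  (hasDerivAt_slice₃ hF).deriv

theorem DifferentiableAt.hasDerivAt_p2 (hF : DifferentiableAt ℝ F p) :
    HasDerivAt (fun s => F (p.1, s, p.2.2)) (p2 F p) p.2.1 :=
  (hasDerivAt_slice₂ hF).differentiableAt.hasDerivAt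

theorem DifferentiableAt.hasDerivAt_p3 (hF : DifferentiableAt ℝ F p) :
    HasDerivAt (fun s => F (p.1, p.2.1, s)) (p3 F p) p.2.2 :=
  (hasDerivAt_slice₃ hF).differentiableAt.hasDerivAt

theorem ContDiffAt.p1_eventuallyEq (hF : ContDiffAt ℝ 2 F p) :
    p1 F =ᶠ[𝓝 p] fun q => fderiv ℝ F q (1, 0, 0) :=
  (hF.eventually (by simp)).mono fun _ hq => p1_eq_fderiv (hq.differentiableAt two_ne_zero)

theorem ContDiffAt.p2_eventuallyEq (hF : ContDiffAt ℝ 2 F p) :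
    p2 F =ᶠ[𝓝 p] fun q => fderiv ℝ F q (0, 1, 0) :=
  (hF.eventually (by simp)).mono fun _ hq => p2_eq_fderiv (hq.differentiableAt two_ne_zero)

theorem ContDiffAt.p3_eventuallyEq (hF : ContDiffAt ℝ 2 F p) :
    p3 F =ᶠ[𝓝 p] fun q => fderiv ℝ F q (0, 0, 1) :=
  (hF.eventually (by simp)).mono fun _ hq => p3_eq_fderiv (hq.differentiableAt two_ne_zero)

theorem ContDiffAt.differentiableAt_p1 (hF : ContDiffAt ℝ 2 F p) :
    DifferentiableAt ℝ (p1 F) p :=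
  (hF.differentiableAt_fderiv_apply _).congr_of_eventuallyEq hF.p1_eventuallyEq

theorem ContDiffAt.differentiableAt_p2 (hF : ContDiffAt ℝ 2 F p) :
    DifferentiableAt ℝ (p2 F) p :=
  (hF.differentiableAt_fderiv_apply _).congr_of_eventuallyEq hF.p2_eventuallyEq

theorem ContDiffAt.differentiableAt_p3 (hF : ContDiffAt ℝ 2 F p) :
    DifferentiableAt ℝ (p3 F) p :=
  (hF.differentiableAt_fderiv_apply _).congr_of_eventuallyEq hF.p3_eventuallyEq

theorem ContDiffAt.p2_p1_comm (hF : ContDiffAt ℝ 2 F p) : p2 (p1 F) p = p1 (p2 F) p := by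
  rw [p2_eq_fderiv hF.differentiableAt_p1, p1_eq_fderiv hF.differentiableAt_p2,
    hF.p1_eventuallyEq.fderiv_eq, hF.p2_eventuallyEq.fderiv_eq, hF.fderiv_fderiv_apply_comm]

theorem ContDiffAt.p3_p1_comm (hF : ContDiffAt ℝ 2 F p) : p3 (p1 F) p = p1 (p3 F) p := by
  rw [p3_eq_fderiv hF.differentiableAt_p1, p1_eq_fderiv hF.differentiableAt_p3,
    hF.p1_eventuallyEq.fderiv_eq, hF.p3_eventuallyEq.fderiv_eq, hF.fderiv_fderiv_apply_comm]

theorem ContDiffAt.p3_p2_comm (hF : ContDiffAt ℝ 2 F p) : p3 (p2 F) p = p2 (p3 F) p := by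
  rw [p3_eq_fderiv hF.differentiableAt_p2, p2_eq_fderiv hF.differentiableAt_p3,
    hF.p2_eventuallyEq.fderiv_eq, hF.p3_eventuallyEq.fderiv_eq, hF.fderiv_fderiv_apply_comm]

end Partials

-- `a, b, c, a₂, a₃, d` stand for `u₁, u₂, u₃, u₁₂, u₁₃, u₂₃`; the left-hand side is
-- `∂₂ log (1 - c / a) - ∂₃ log (b / a - 1)` as computed by the quotient and chain rules.
theorem schwarzianKP_conservation_identity {a b c a₂ a₃ d : ℝ} (ha : a ≠ 0)
    (hca : 1 - c / a ≠ 0) (hba : b / a - 1 ≠ 0) :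
    -((d * a - c * a₂) / a ^ 2) / (1 - c / a) - (d * a - b * a₃) / a ^ 2 / (b / a - 1)
      = (c * (b - a) * a₂ + b * (a - c) * a₃ + a * (c - b) * d) / (a * (a - c) * (b - a)) := by
  have hac : a - c ≠ 0 := by
    contrapose! hca; rw [← sub_eq_zero.mp hca, div_self ha, sub_self]
  have hab : b - a ≠ 0 := by
    contrapose! hba; rw [sub_eq_zero.mp hba, div_self ha, sub_self]
  field_simp
  ring

/-- Solutions of the dispersionless Schwarzian KP equation
`u₃(u₂ − u₁)u₁₂ + u₂(u₁ − u₃)u₁₃ + u₁(u₃ − u₂)u₂₃ = 0` on an open set `Ω`, with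
`u₁ ≠ 0` and `1 − u₃/u₁ > 0`, `u₂/u₁ − 1 > 0`, satisfy the conservation law
`∂₂ log(1 − u₃/u₁) − ∂₃ log(u₂/u₁ − 1) = 0` on `Ω`. -/
theorem dispersionless_schwarzian_KP_conservation
    (Ω : Set (ℝ × ℝ × ℝ)) (hΩ : IsOpen Ω)
    (u : ℝ × ℝ × ℝ → ℝ) (hu : ContDiffOn ℝ 2 u Ω)
    (h1 : ∀ p ∈ Ω, p1 u p ≠ 0)
    (h31 : ∀ p ∈ Ω, 0 < 1 - p3 u p / p1 u p)
    (h21 : ∀ p ∈ Ω, 0 < p2 u p / p1 u p - 1)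
    (hSKP : ∀ p ∈ Ω,
      p3 u p * (p2 u p - p1 u p) * p1 (p2 u) p
        + p2 u p * (p1 u p - p3 u p) * p1 (p3 u) p
        + p1 u p * (p3 u p - p2 u p) * p2 (p3 u) p = 0) :
    ∀ p ∈ Ω,
      p2 (fun q => Real.log (1 - p3 u q / p1 u q)) p
        - p3 (fun q => Real.log (p2 u q / p1 u q - 1)) p = 0 := by
  intro p hp
  have hup : ContDiffAt ℝ 2 u p := hu.contDiffAt (hΩ.mem_nhds hp)
  have hlog₂ := ((hup.differentiableAt_p3.hasDerivAt_p2.fun_div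
    hup.differentiableAt_p1.hasDerivAt_p2 (h1 p hp)).const_sub 1).log (h31 p hp).ne'
  have hlog₃ := ((hup.differentiableAt_p2.hasDerivAt_p3.fun_div
    hup.differentiableAt_p1.hasDerivAt_p3 (h1 p hp)).sub_const 1).log (h21 p hp).ne'
  rw [p2, p3, hlog₂.deriv, hlog₃.deriv]
  simp only [Prod.mk.eta]
  rw [hup.p2_p1_comm, hup.p3_p1_comm, hup.p3_p2_comm,
    schwarzianKP_conservation_identity (h1 p hp) (h31 p hp).ne' (h21 p hp).ne', hSKP p hp, zero_div]
end
end

section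
/- Let ε > 0 and let u, ψ : ℤ² × ℝ → ℝ be differentiable in the real variable x₃, with u₃ = ∂₃u. Suppose that at every point the linear system T₁ψ = −e^{(T₁u − u)/ε}·(T₂ψ − ψ) and ε·∂₃ψ = −u₃·(T₂ψ − ψ) holds, and that T₂ψ − ψ is nowhere zero and T₁u₃ is nowhere zero. Then u satisfies the differential–difference equation T₂u₃/T₁u₃ = e^{(T₁₂u − T₁u − T₂u + u)/ε} at every point. -/
/-!
Differentiating the first Lax equation `T₁ψ = −E (T₂ψ − ψ)`, `E = e^{(T₁u − u)/ε}`, in `x₃` and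
eliminating every `x₃`-derivative of `ψ` with the second equation (taken at `p`, `T₁p` and `T₂p`)
leaves `E · T₂u₃ · (T₂²ψ − T₂ψ) = T₂E · T₁u₃ · (T₂²ψ − T₂ψ)`, where `T₂E` enters through the first
equation at `T₂p`. Cancelling `T₂²ψ − T₂ψ ≠ 0` gives `T₂u₃ / T₁u₃ = T₂E / E`, which is the claim.
-/

noncomputable section

/-- The shift `T₁`. -/
def S1 (v : ℤ × ℤ × ℝ → ℝ) : ℤ × ℤ × ℝ → ℝ := fun p => v (p.1 + 1, p.2.1, p.2.2)

/-- The shift `T₂`. -/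
def S2 (v : ℤ × ℤ × ℝ → ℝ) : ℤ × ℤ × ℝ → ℝ := fun p => v (p.1, p.2.1 + 1, p.2.2)

/-- The partial derivative `∂₃`; `deriv` makes it `0` where the slice is not differentiable. -/
def d3 (v : ℤ × ℤ × ℝ → ℝ) : ℤ × ℤ × ℝ → ℝ :=
  fun p => deriv (fun s => v (p.1, p.2.1, s)) p.2.2

open Real

theorem hasDerivAt_neg_exp_mul_sub {f g h k : ℝ → ℝ} {f' g' h' k' ε x : ℝ}
    (hf : HasDerivAt f f' x) (hg : HasDerivAt g g' x) (hh : HasDerivAt h h' x)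
    (hk : HasDerivAt k k' x) :
    HasDerivAt (fun s => -exp ((f s - g s) / ε) * (h s - k s))
      (-exp ((f x - g x) / ε) * ((f' - g') / ε * (h x - k x) + (h' - k'))) x := by
  refine ((((hf.sub hg).div_const ε).exp.neg).mul (hh.sub hk)).congr_deriv ?_
  simp only [Pi.neg_apply, Pi.sub_apply]
  ring

theorem eps_mul_S1_d3_of_first_lax_eq {ε : ℝ} (hε : ε ≠ 0) {u ψ : ℤ × ℤ × ℝ → ℝ}
    (hu : ∀ m n : ℤ, Differentiable ℝ (fun s : ℝ => u (m, n, s)))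
    (hψ : ∀ m n : ℤ, Differentiable ℝ (fun s : ℝ => ψ (m, n, s)))
    (hL1 : ∀ p, S1 ψ p = -exp ((S1 u p - u p) / ε) * (S2 ψ p - ψ p)) (p : ℤ × ℤ × ℝ) :
    ε * S1 (d3 ψ) p = -exp ((S1 u p - u p) / ε) *
      ((S1 (d3 u) p - d3 u p) * (S2 ψ p - ψ p) + ε * (S2 (d3 ψ) p - d3 ψ p)) := by
  obtain ⟨m, n, x⟩ := p
  have hslice : (fun s => ψ (m + 1, n, s)) =
      fun s => -exp ((u (m + 1, n, s) - u (m, n, s)) / ε) * (ψ (m, n + 1, s) - ψ (m, n, s)) :=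
    funext fun s => hL1 (m, n, s)
  have hderiv := (hasDerivAt_neg_exp_mul_sub (ε := ε) ((hu (m + 1) n) x).hasDerivAt
    ((hu m n) x).hasDerivAt ((hψ m (n + 1)) x).hasDerivAt ((hψ m n) x).hasDerivAt).deriv
  simp only [S1, S2, d3]
  rw [hslice, hderiv]
  field_simp

/-- Compatibility of the Lax pair `T₁ψ = −e^{(T₁u − u)/ε}(T₂ψ − ψ)`,
`ε ψ₃ = −u₃(T₂ψ − ψ)` forces the differential–difference equation
`T₂u₃/T₁u₃ = e^{(T₁₂u − T₁u − T₂u + u)/ε}`. -/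
theorem lax_pair_case2a (ε : ℝ) (hε : 0 < ε) (u ψ : ℤ × ℤ × ℝ → ℝ)
    (hu : ∀ (m n : ℤ), Differentiable ℝ (fun s : ℝ => u (m, n, s)))
    (hψ : ∀ (m n : ℤ), Differentiable ℝ (fun s : ℝ => ψ (m, n, s)))
    (hL1 : ∀ p : ℤ × ℤ × ℝ,
      S1 ψ p = -Real.exp ((S1 u p - u p) / ε) * (S2 ψ p - ψ p))
    (hL2 : ∀ p : ℤ × ℤ × ℝ, ε * d3 ψ p = -(d3 u p) * (S2 ψ p - ψ p))
    (hne : ∀ p : ℤ × ℤ × ℝ, S2 ψ p - ψ p ≠ 0)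
    (hu3 : ∀ p : ℤ × ℤ × ℝ, S1 (d3 u) p ≠ 0) :
    ∀ p : ℤ × ℤ × ℝ,
      S2 (d3 u) p / S1 (d3 u) p
        = Real.exp ((S1 (S2 u) p - S1 u p - S2 u p + u p) / ε) := by
  intro p
  have hderiv := eps_mul_S1_d3_of_first_lax_eq hε.ne' hu hψ hL1 p
  have hL1₂ : S1 (S2 ψ) p =
      -exp ((S1 (S2 u) p - S2 u p) / ε) * (S2 (S2 ψ) p - S2 ψ p) := hL1 (p.1, p.2.1 + 1, p.2.2)
  have hL2₁ : ε * S1 (d3 ψ) p = -S1 (d3 u) p * (S1 (S2 ψ) p - S1 ψ p) :=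
    hL2 (p.1 + 1, p.2.1, p.2.2)
  have hL2₂ : ε * S2 (d3 ψ) p = -S2 (d3 u) p * (S2 (S2 ψ) p - S2 ψ p) :=
    hL2 (p.1, p.2.1 + 1, p.2.2)
  have hcompat : S2 (d3 u) p * exp ((S1 u p - u p) / ε) =
      S1 (d3 u) p * exp ((S1 (S2 u) p - S2 u p) / ε) :=
    mul_right_cancel₀ (b := S2 (S2 ψ) p - S2 ψ p) (hne (p.1, p.2.1 + 1, p.2.2)) (by
      linear_combination hL2₁ - hderiv + exp ((S1 u p - u p) / ε) * (hL2₂ - hL2 p)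
        + S1 (d3 u) p * (hL1 p - hL1₂))
  rw [div_eq_iff (hu3 p), show (S1 (S2 u) p - S1 u p - S2 u p + u p) / ε =
    (S1 (S2 u) p - S2 u p) / ε - (S1 u p - u p) / ε by ring, exp_sub,
    div_mul_eq_mul_div, eq_div_iff (exp_ne_zero _)]
  linear_combination hcompat
end
end

section
/- Let ε > 0 and let u, ψ : ℤ² × ℝ → ℝ be differentiable in the real variable x₃, with u₃ = ∂₃u. Suppose that at every point the linear system T₁ψ = −((T₁u − u)/ε)·T₂ψ + ψ and ε·∂₃ψ = −u₃·T₂ψ holds, and that ψ is nowhere zero. Then u satisfies the differential–difference equation (T₁₂u − T₂u)·T₁u₃ = (T₁u − u)·T₂u₃ at every point. -/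
noncomputable section

/-!
Clearing the denominator, the first Lax equation reads `ε T₁ψ = εψ − (T₁u − u) T₂ψ`.
Differentiating it in `x₃` and replacing every `εψ₃` by means of the second equation (at the
points `p`, `T₁p` and `T₂p`) leaves `ε T₁u₃ (T₂ψ − T₁₂ψ) = (T₁u − u) T₂u₃ T₂₂ψ`, while the first
equation at `T₂p` gives `ε (T₁₂ψ − T₂ψ) = −(T₁₂u − T₂u) T₂₂ψ`. Hence the differential–difference
equation holds after multiplication by `T₂₂ψ`, which is nonzero.
-/

def SliceDifferentiable (v : ℤ × ℤ × ℝ → ℝ) : Prop :=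
  ∀ m n : ℤ, Differentiable ℝ fun s : ℝ => v (m, n, s)

namespace SliceDifferentiable

variable {f g : ℤ × ℤ × ℝ → ℝ}

theorem shift1 (hf : SliceDifferentiable f) : SliceDifferentiable (S1 f) :=
  fun m n => hf (m + 1) n

theorem shift2 (hf : SliceDifferentiable f) : SliceDifferentiable (S2 f) :=
  fun m n => hf m (n + 1)

theorem sub (hf : SliceDifferentiable f) (hg : SliceDifferentiable g) :
    SliceDifferentiable (f - g) :=
  fun m n => (hf m n).sub (hg m n)

theorem mul (hf : SliceDifferentiable f) (hg : SliceDifferentiable g) :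
    SliceDifferentiable (f * g) :=
  fun m n => (hf m n).mul (hg m n)

theorem const_smul (c : ℝ) (hf : SliceDifferentiable f) : SliceDifferentiable (c • f) :=
  fun m n => (hf m n).const_smul c

end SliceDifferentiable

section Derivation

variable {f g : ℤ × ℤ × ℝ → ℝ}

theorem d3_S1 (f : ℤ × ℤ × ℝ → ℝ) : d3 (S1 f) = S1 (d3 f) := rfl

theorem d3_S2 (f : ℤ × ℤ × ℝ → ℝ) : d3 (S2 f) = S2 (d3 f) := rfl

theorem d3_smul (c : ℝ) (f : ℤ × ℤ × ℝ → ℝ) : d3 (c • f) = c • d3 f :=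
  funext fun _ => deriv_const_smul_field c _

theorem d3_sub (hf : SliceDifferentiable f) (hg : SliceDifferentiable g) :
    d3 (f - g) = d3 f - d3 g :=
  funext fun p => deriv_sub (hf p.1 p.2.1 p.2.2) (hg p.1 p.2.1 p.2.2)

theorem d3_mul (hf : SliceDifferentiable f) (hg : SliceDifferentiable g) :
    d3 (f * g) = d3 f * g + f * d3 g :=
  funext fun p => deriv_mul (hf p.1 p.2.1 p.2.2) (hg p.1 p.2.1 p.2.2)

end Derivation

section LaxPair

variable {ε : ℝ} {u ψ : ℤ × ℤ × ℝ → ℝ}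

theorem smul_S1_eq_of_lax (hε : ε ≠ 0)
    (hL1 : ∀ p, S1 ψ p = -((S1 u p - u p) / ε) * S2 ψ p + ψ p) :
    ε • S1 ψ = ε • ψ - (S1 u - u) * S2 ψ := by
  funext p
  simp only [Pi.smul_apply, Pi.sub_apply, Pi.mul_apply, smul_eq_mul, hL1 p]
  field_simp
  ring

theorem smul_d3_S1_eq_of_lax (hε : ε ≠ 0) (hu : SliceDifferentiable u)
    (hψ : SliceDifferentiable ψ)
    (hL1 : ∀ p, S1 ψ p = -((S1 u p - u p) / ε) * S2 ψ p + ψ p) :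
    ε • S1 (d3 ψ) = ε • d3 ψ - ((S1 (d3 u) - d3 u) * S2 ψ + (S1 u - u) * S2 (d3 ψ)) := by
  have h := congrArg d3 (smul_S1_eq_of_lax hε hL1)
  rwa [d3_smul, d3_sub (hψ.const_smul ε) ((hu.shift1.sub hu).mul hψ.shift2),
    d3_smul, d3_mul (hu.shift1.sub hu) hψ.shift2, d3_sub hu.shift1 hu, d3_S1, d3_S1,
    d3_S2] at h

end LaxPair

/-- Compatibility of the Lax pair `T₁ψ = −((T₁u − u)/ε)T₂ψ + ψ`,
`ε ψ₃ = −u₃ T₂ψ` forces the differential–difference equation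
`(T₁₂u − T₂u)T₁u₃ = (T₁u − u)T₂u₃`. -/
theorem lax_pair_case2bi (ε : ℝ) (hε : 0 < ε) (u ψ : ℤ × ℤ × ℝ → ℝ)
    (hu : ∀ (m n : ℤ), Differentiable ℝ (fun s : ℝ => u (m, n, s)))
    (hψ : ∀ (m n : ℤ), Differentiable ℝ (fun s : ℝ => ψ (m, n, s)))
    (hL1 : ∀ p : ℤ × ℤ × ℝ, S1 ψ p = -((S1 u p - u p) / ε) * S2 ψ p + ψ p)
    (hL2 : ∀ p : ℤ × ℤ × ℝ, ε * d3 ψ p = -(d3 u p) * S2 ψ p)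
    (hne : ∀ p : ℤ × ℤ × ℝ, ψ p ≠ 0) :
    ∀ p : ℤ × ℤ × ℝ,
      (S1 (S2 u) p - S2 u p) * S1 (d3 u) p = (S1 u p - u p) * S2 (d3 u) p := by
  intro p
  have hD : ε * S1 (d3 ψ) p = ε * d3 ψ p -
      ((S1 (d3 u) p - d3 u p) * S2 ψ p + (S1 u p - u p) * S2 (d3 ψ) p) :=
    congrFun (smul_d3_S1_eq_of_lax hε.ne' hu hψ hL1) p
  have hT₂ : ε * S1 (S2 ψ) p = ε * S2 ψ p - (S1 (S2 u) p - S2 u p) * S2 (S2 ψ) p :=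
    congrFun (smul_S1_eq_of_lax hε.ne' hL1) (p.1, p.2.1 + 1, p.2.2)
  have h₀ : ε * d3 ψ p = -d3 u p * S2 ψ p := hL2 p
  have h₁ : ε * S1 (d3 ψ) p = -S1 (d3 u) p * S1 (S2 ψ) p := hL2 _
  have h₂ : ε * S2 (d3 ψ) p = -S2 (d3 u) p * S2 (S2 ψ) p := hL2 _
  have hψ₂₂ : S2 (S2 ψ) p ≠ 0 := hne _
  refine mul_right_cancel₀ hψ₂₂ ?_
  linear_combination ε * hD - ε * h₁ + ε * h₀ - (S1 u p - u p) * h₂ + S1 (d3 u) p * hT₂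
end
end
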